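/- arXiv:2207.06250 — 3 statements merged into one kernel-verified Lean document; each statement's English description precedes it below -/
import Mathlib

section
/- Fix α > 1, 0 < r < 2^{−α}, and for i ≥ 0 set r_i = r·2^{−i/n}. Let {q_i} ⊂ B_1 \ {0} satisfy |q_i|^α > 2^α·r_i for all i, and let E = ⋃_{i≥0} B_{r_i}(q_i) ⊂ ℝⁿ (n ≥ 2). Then the origin is a point of density 0 for E: lim_{ρ→0} |E ∩ B_ρ|/(ω_n ρⁿ) = 0. In fact |E ∩ B_ρ|/(ω_n ρⁿ) ≤ 2·ρ^{n(α−1)} for 0 < ρ < r. -/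
open MeasureTheory Metric Set Filter Topology Real
open scoped ENNReal

/-! A ball `B(qᵢ, rᵢ)` can meet `B(0, ρ)` only if `rᵢ < ρ^α`: meeting it forces `‖qᵢ‖ < ρ + rᵢ`,
while `‖qᵢ‖ > 2 rᵢ^{1/α} ≥ rᵢ^{1/α} + rᵢ` because `rᵢ ≤ 1`. Since `rᵢⁿ = 2⁻ⁱ rⁿ`, the volumes of
the balls form a geometric sequence of ratio `1/2`, so the balls meeting `B(0, ρ)` have total
volume at most twice the largest of them, hence at most `2 |B(0, ρ^α)| = 2 ρ^{n(α-1)} |B(0, ρ)|`. -/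

theorem ENNReal.tsum_indicator_inv_two_pow_mul_le {S : Set ℕ} {c x : ℝ≥0∞}
    (h : ∀ i ∈ S, 2⁻¹ ^ i * c ≤ x) : ∑' i, S.indicator (fun i => 2⁻¹ ^ i * c) i ≤ 2 * x := by
  rcases S.eq_empty_or_nonempty with rfl | hS
  · simp
  have hle : ∀ i ∈ S, sInf S ≤ i := fun i hi => Nat.sInf_le hi
  have hinj : Function.Injective fun i : S => (i : ℕ) - sInf S := fun a b hab =>
    Subtype.ext (by have := hle a a.2; have := hle b b.2; dsimp only at hab; omega)
  calc ∑' i, S.indicator (fun i => 2⁻¹ ^ i * c) i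
      = ∑' i : S, 2⁻¹ ^ ((i : ℕ) - sInf S) * (2⁻¹ ^ sInf S * c) := by
        rw [← tsum_subtype]
        refine tsum_congr fun i => ?_
        rw [← mul_assoc, ← pow_add, Nat.sub_add_cancel (hle i i.2)]
    _ ≤ ∑' i : S, 2⁻¹ ^ ((i : ℕ) - sInf S) * x :=
        ENNReal.tsum_le_tsum fun i => by gcongr; exact h _ (Nat.sInf_mem hS)
    _ ≤ ∑' k, 2⁻¹ ^ k * x := ENNReal.tsum_comp_le_tsum_of_injective hinj fun k => 2⁻¹ ^ k * x
    _ = 2 * x := by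
        rw [ENNReal.tsum_mul_right, ENNReal.tsum_geometric, ENNReal.one_sub_inv_two, inv_inv]

theorem lt_rpow_of_ball_inter_ball_nonempty {E : Type*} [SeminormedAddCommGroup E] {q : E}
    {s ρ α : ℝ} (hα : 1 ≤ α) (hs0 : 0 ≤ s) (hs1 : s ≤ 1) (hq : 2 ^ α * s < ‖q‖ ^ α)
    (h : (ball q s ∩ ball 0 ρ).Nonempty) : s < ρ ^ α := by
  obtain ⟨x, hxq, hx0⟩ := h
  have hα0 : 0 < α := by linarith
  set t := s ^ α⁻¹
  have ht : t ^ α = s := Real.rpow_inv_rpow hs0 hα0.ne'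
  have hst : s ≤ t := by
    simpa using Real.rpow_le_rpow_of_exponent_ge' hs0 hs1 (by positivity) (inv_le_one_of_one_le₀ hα)
  have hqt : 2 * t < ‖q‖ := by
    rwa [← Real.rpow_lt_rpow_iff (by positivity) (norm_nonneg _) hα0,
      Real.mul_rpow zero_le_two (by positivity), ht]
  have hqs : ‖q‖ < s + ρ := by
    rw [mem_ball] at hxq
    rw [mem_ball_zero_iff] at hx0
    calc ‖q‖ ≤ ‖q - x‖ + ‖x‖ := norm_le_norm_sub_add q x
      _ < s + ρ := by rw [← dist_eq_norm, dist_comm]; gcongr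
  calc s = t ^ α := ht.symm
    _ < ρ ^ α := Real.rpow_lt_rpow (by positivity) (by linarith) hα0

section AddHaar

variable {E : Type*} [NormedAddCommGroup E] [NormedSpace ℝ E] [MeasurableSpace E] [BorelSpace E]
  [FiniteDimensional ℝ E] [Nontrivial E] (μ : Measure E) [μ.IsAddHaarMeasure]

theorem addHaar_ball_mul_two_rpow_neg {n : ℕ} (hn : Module.finrank ℝ E = n) (x : E) (r : ℝ)
    (i : ℕ) :
    μ (ball x (r * 2 ^ (-(i : ℝ) / n))) = 2⁻¹ ^ i * μ (ball 0 r) := by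
  have hn0 : (n : ℝ) ≠ 0 := by rw [← hn]; exact_mod_cast Module.finrank_pos.ne'
  rw [mul_comm, Measure.addHaar_ball_mul μ x (by positivity), hn, ← Real.rpow_natCast,
    ← Real.rpow_mul zero_le_two, div_mul_cancel₀ _ hn0, Real.rpow_neg zero_le_two,
    Real.rpow_natCast, ← inv_pow, ENNReal.ofReal_pow (by norm_num),
    ENNReal.ofReal_inv_of_pos two_pos, ENNReal.ofReal_ofNat]

theorem addHaar_iUnion_ball_inter_ball_le {n : ℕ} (hn : Module.finrank ℝ E = n) {α r ρ : ℝ}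
    (hα : 1 ≤ α) (hr0 : 0 ≤ r) (hr1 : r ≤ 1) (q : ℕ → E)
    (hqr : ∀ i : ℕ, 2 ^ α * (r * 2 ^ (-(i : ℝ) / n)) < ‖q i‖ ^ α) (hρ : 0 < ρ) :
    μ ((⋃ i, ball (q i) (r * 2 ^ (-(i : ℝ) / n))) ∩ ball 0 ρ) ≤
      ENNReal.ofReal (2 * ρ ^ ((n : ℝ) * (α - 1))) * μ (ball 0 ρ) := by
  set R : ℕ → ℝ := fun i => r * 2 ^ (-(i : ℝ) / n)
  set S := {i | (ball (q i) (R i) ∩ ball 0 ρ).Nonempty}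
  have hR1 : ∀ i, R i ≤ 1 := fun i => by
    have : (2 : ℝ) ^ (-(i : ℝ) / n) ≤ 1 :=
      Real.rpow_le_one_of_one_le_of_nonpos one_le_two
        (by simp only [neg_div, neg_nonpos]; positivity)
    nlinarith [Real.rpow_nonneg zero_le_two (-(i : ℝ) / n)]
  have hS : ∀ i ∈ S, 2⁻¹ ^ i * μ (ball 0 r) ≤ μ (ball 0 (ρ ^ α)) := fun i hi => by
    rw [← addHaar_ball_mul_two_rpow_neg μ hn (q i), Measure.addHaar_ball_center]
    exact measure_mono <| ball_subset_ball <|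
      (lt_rpow_of_ball_inter_ball_nonempty hα (by positivity) (hR1 i) (hqr i) hi).le
  calc μ ((⋃ i, ball (q i) (R i)) ∩ ball 0 ρ)
      ≤ ∑' i, μ (ball (q i) (R i) ∩ ball 0 ρ) := by rw [iUnion_inter]; exact measure_iUnion_le _
    _ ≤ ∑' i, S.indicator (fun i => 2⁻¹ ^ i * μ (ball 0 r)) i := ENNReal.tsum_le_tsum fun i => by
        by_cases hi : i ∈ S
        · rw [indicator_of_mem hi, ← addHaar_ball_mul_two_rpow_neg μ hn (q i)]
          exact measure_mono inter_subset_left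
        · rw [indicator_of_notMem hi, not_nonempty_iff_eq_empty.mp hi, measure_empty]
    _ ≤ 2 * μ (ball 0 (ρ ^ α)) := ENNReal.tsum_indicator_inv_two_pow_mul_le hS
    _ = ENNReal.ofReal (2 * ρ ^ ((n : ℝ) * (α - 1))) * μ (ball 0 ρ) := by
        have hρα : ρ ^ α = ρ ^ (α - 1) * ρ := by
          conv_lhs => rw [← sub_add_cancel α 1, Real.rpow_add_one hρ.ne']
        rw [hρα, Measure.addHaar_ball_mul μ 0 (by positivity), hn, ← mul_assoc,
          ENNReal.ofReal_mul zero_le_two, ENNReal.ofReal_ofNat, ← Real.rpow_natCast,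
          ← Real.rpow_mul hρ.le, mul_comm (α - 1)]

end AddHaar

theorem stmt_16_general (n : ℕ) (hn : 2 ≤ n) (α r : ℝ) (hα : 1 < α)
    (hr0 : 0 < r) (hr : r < (2 : ℝ) ^ (-α))
    (q : ℕ → EuclideanSpace ℝ (Fin n))
    (hqr : ∀ i : ℕ, (2 : ℝ) ^ α * (r * (2 : ℝ) ^ (-(i : ℝ) / n)) < ‖q i‖ ^ α) :
    Tendsto
        (fun ρ : ℝ =>
          volume ((⋃ i, ball (q i) (r * (2 : ℝ) ^ (-(i : ℝ) / n))) ∩ ball 0 ρ) /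
            volume (ball (0 : EuclideanSpace ℝ (Fin n)) ρ))
        (𝓝[>] (0 : ℝ)) (𝓝 0) ∧
      ∀ ρ : ℝ, 0 < ρ → ρ < r →
        (volume ((⋃ i, ball (q i) (r * (2 : ℝ) ^ (-(i : ℝ) / n))) ∩ ball 0 ρ)).toReal /
            (volume (ball (0 : EuclideanSpace ℝ (Fin n)) ρ)).toReal ≤
          2 * ρ ^ ((n : ℝ) * (α - 1)) := by
  have : Nontrivial (EuclideanSpace ℝ (Fin n)) :=
    Module.nontrivial_of_finrank_pos (R := ℝ) (by rw [finrank_euclideanSpace_fin]; omega)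
  have hr1 : r ≤ 1 := hr.le.trans (Real.rpow_le_one_of_one_le_of_nonpos one_le_two (by linarith))
  have hdensity : ∀ ρ : ℝ, 0 < ρ →
      volume ((⋃ i, ball (q i) (r * (2 : ℝ) ^ (-(i : ℝ) / n))) ∩ ball 0 ρ) /
        volume (ball (0 : EuclideanSpace ℝ (Fin n)) ρ) ≤
      ENNReal.ofReal (2 * ρ ^ ((n : ℝ) * (α - 1))) := fun ρ hρ =>
    ENNReal.div_le_of_le_mul <| addHaar_iUnion_ball_inter_ball_le volume
      finrank_euclideanSpace_fin hα.le hr0.le hr1 q hqr hρ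
  refine ⟨?_, fun ρ hρ _ => ?_⟩
  · have hexp : 0 < (n : ℝ) * (α - 1) :=
      mul_pos (by exact_mod_cast (by omega : 0 < n)) (by linarith)
    have hlim : Tendsto (fun ρ : ℝ => ENNReal.ofReal (2 * ρ ^ ((n : ℝ) * (α - 1))))
        (𝓝[>] 0) (𝓝 0) := by
      simpa [Real.zero_rpow hexp.ne'] using ENNReal.tendsto_ofReal <|
        ((Real.continuousAt_rpow_const 0 _ (Or.inr hexp.le)).tendsto.const_mul 2).mono_left
          nhdsWithin_le_nhds
    exact tendsto_of_tendsto_of_tendsto_of_le_of_le' tendsto_const_nhds hlim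
      (Eventually.of_forall fun _ => zero_le) (eventually_nhdsWithin_of_forall hdensity)
  · rw [← ENNReal.toReal_div]
    exact ENNReal.toReal_le_of_le_ofReal (by positivity) (hdensity ρ hρ)

/-- The union `E = ⋃ᵢ B_{rᵢ}(qᵢ)` with `rᵢ = r 2^{−i/n}`, `qᵢ ∈ B₁ \ {0}`,
`|qᵢ|^α > 2^α rᵢ`, has density 0 at the origin; in fact
`|E ∩ B_ρ|/(ωₙ ρⁿ) ≤ 2 ρ^{n(α−1)}` for `0 < ρ < r`. -/
theorem stmt_16 (n : ℕ) (hn : 2 ≤ n) (α r : ℝ) (hα : 1 < α)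
    (hr0 : 0 < r) (hr : r < (2 : ℝ) ^ (-α))
    (q : ℕ → EuclideanSpace ℝ (Fin n))
    (hq1 : ∀ i, q i ∈ ball (0 : EuclideanSpace ℝ (Fin n)) 1)
    (hq0 : ∀ i, q i ≠ 0)
    (hqr : ∀ i : ℕ, (2 : ℝ) ^ α * (r * (2 : ℝ) ^ (-(i : ℝ) / n)) < ‖q i‖ ^ α) :
    Tendsto
        (fun ρ : ℝ =>
          volume ((⋃ i, ball (q i) (r * (2 : ℝ) ^ (-(i : ℝ) / n))) ∩ ball 0 ρ) /
            volume (ball (0 : EuclideanSpace ℝ (Fin n)) ρ))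
        (𝓝[>] (0 : ℝ)) (𝓝 0) ∧
      ∀ ρ : ℝ, 0 < ρ → ρ < r →
        (volume ((⋃ i, ball (q i) (r * (2 : ℝ) ^ (-(i : ℝ) / n))) ∩ ball 0 ρ)).toReal /
            (volume (ball (0 : EuclideanSpace ℝ (Fin n)) ρ)).toReal ≤
          2 * ρ ^ ((n : ℝ) * (α - 1)) :=
  stmt_16_general n hn α r hα hr0 hr q hqr
end

section
/- Let n ≥ 2, p < 0 with n − 1 + p < 0, α > 1 chosen so that n − 1 + p/α > n − 1 + p (e.g. any α > 1). With E = ⋃_{i≥0} B_{r_i}(q_i) as above (r_i = r·2^{−i/n}, |q_i|^α > 2^α r_i, q_i ∈ B_1), one has Σ_{i≥0} ∫_{∂B_{r_i}(q_i)} |x|^p dH^{n−1} ≤ C(n, α, p)·r^{n−1+p/α}, where C depends only on n, α, p. -/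
/-!
A sphere `∂B_ρ(q)` with `2^α ρ < |q|^α` and `ρ ≤ 1` stays at distance at least `ρ^{1/α}` from
the origin, so the integral of `|x|^p` over it is at most
`ρ^{p/α} H^{n-1}(∂B_ρ) = ρ^{n-1+p/α} H^{n-1}(S^{n-1})`. For `ρ = r 2^{-i/n}` these bounds form
a geometric series of ratio `2^{-(n-1+p/α)/n} < 1`. The unit sphere has finite
`H^{n-1}`-measure because it is covered by finitely many caps, each the image of a bounded
subset of a tangent hyperplane under the 2-Lipschitz radial projection.
-/

open MeasureTheory Metric Set Real
open scoped ENNReal NNReal RealInnerProductSpace Pointwise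

theorem norm_rpow_le_of_mem_sphere {E : Type*} [SeminormedAddCommGroup E] {α p ρ : ℝ}
    {q x : E} (hα : 1 ≤ α) (hp : p ≤ 0) (hρ : 0 < ρ) (hρ1 : ρ ≤ 1)
    (hq : 2 ^ α * ρ < ‖q‖ ^ α) (hx : x ∈ sphere q ρ) :
    ‖x‖ ^ p ≤ ρ ^ (p / α) := by
  have hα0 : 0 < α := one_pos.trans_le hα
  set s := ρ ^ α⁻¹
  have hs : 0 < s := by positivity
  have hρs : ρ ≤ s := by
    simpa using Real.rpow_le_rpow_of_exponent_ge hρ hρ1 (inv_le_one_of_one_le₀ hα)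
  have hqs : 2 * s < ‖q‖ := by
    rwa [← Real.rpow_lt_rpow_iff (by positivity) (norm_nonneg q) hα0,
      Real.mul_rpow zero_le_two hs.le, Real.rpow_inv_rpow hρ.le hα0.ne']
  have hxs : s ≤ ‖x‖ := by
    have := norm_sub_norm_le q x
    rw [← dist_eq_norm, dist_comm, mem_sphere.1 hx] at this
    linarith
  calc ‖x‖ ^ p ≤ s ^ p := Real.rpow_le_rpow_of_nonpos hs hxs hp
    _ = ρ ^ (p / α) := by rw [← Real.rpow_mul hρ.le, inv_mul_eq_div]

section Normed

variable {E : Type*} [NormedAddCommGroup E] [NormedSpace ℝ E]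

theorem lipschitzOnWith_normalize :
    LipschitzOnWith 2 (NormedSpace.normalize : E → E) {x | 1 ≤ ‖x‖} := by
  refine LipschitzOnWith.of_dist_le_mul fun x (hx : 1 ≤ ‖x‖) y (hy : 1 ≤ ‖y‖) => ?_
  have hx0 : 0 < ‖x‖ := one_pos.trans_le hx
  have hy0 : 0 < ‖y‖ := one_pos.trans_le hy
  have hsplit : NormedSpace.normalize x - NormedSpace.normalize y =
      ‖x‖⁻¹ • (x - y) + (‖x‖⁻¹ - ‖y‖⁻¹) • y := by
    simp only [NormedSpace.normalize, smul_sub, sub_smul]; abel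
  have h₁ : ‖‖x‖⁻¹ • (x - y)‖ ≤ ‖x - y‖ := by
    rw [norm_smul, norm_inv, norm_norm]
    exact mul_le_of_le_one_left (norm_nonneg _) (inv_le_one_of_one_le₀ hx)
  have h₂ : ‖(‖x‖⁻¹ - ‖y‖⁻¹) • y‖ ≤ ‖x - y‖ := by
    have : (‖x‖⁻¹ - ‖y‖⁻¹) * ‖y‖ = (‖y‖ - ‖x‖) / ‖x‖ := by field_simp
    rw [norm_smul, Real.norm_eq_abs, ← abs_of_pos hy0, ← abs_mul, abs_of_pos hy0, this,
      abs_div, abs_of_pos hx0]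
    calc |‖y‖ - ‖x‖| / ‖x‖ ≤ |‖y‖ - ‖x‖| := div_le_self (abs_nonneg _) hx
      _ ≤ ‖x - y‖ := by rw [abs_sub_comm]; exact abs_norm_sub_norm_le x y
  rw [dist_eq_norm, dist_eq_norm, hsplit]
  calc _ ≤ ‖‖x‖⁻¹ • (x - y)‖ + ‖(‖x‖⁻¹ - ‖y‖⁻¹) • y‖ := norm_add_le _ _
    _ ≤ (2 : ℝ≥0) * ‖x - y‖ := by push_cast; linarith

variable [MeasurableSpace E] [BorelSpace E]

theorem hausdorffMeasure_sphere {d : ℝ} (hd : 0 ≤ d) (q : E) {ρ : ℝ} (hρ : 0 < ρ) :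
    μH[d] (sphere q ρ) = ENNReal.ofReal (ρ ^ d) * μH[d] (sphere (0 : E) 1) := by
  have hsphere : sphere q ρ = q +ᵥ ρ • sphere (0 : E) 1 := by
    rw [smul_sphere' hρ.ne', vadd_sphere, smul_zero, vadd_eq_add, add_zero,
      Real.norm_of_nonneg hρ.le, mul_one]
  rw [hsphere, hausdorffMeasure_vadd _ (Or.inl hd), Measure.hausdorffMeasure_smul₀ hd hρ.ne',
    ENNReal.smul_def, smul_eq_mul, ENNReal.coe_rpow_of_nonneg _ hd,
    ← ENNReal.ofReal_rpow_of_pos hρ, ← enorm_eq_nnnorm, Real.enorm_eq_ofReal hρ.le]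

theorem setLIntegral_sphere_norm_rpow_le {d α p ρ : ℝ} {q : E} (hd : 0 ≤ d) (hα : 1 ≤ α)
    (hp : p ≤ 0) (hρ : 0 < ρ) (hρ1 : ρ ≤ 1) (hq : 2 ^ α * ρ < ‖q‖ ^ α) :
    ∫⁻ x in sphere q ρ, ENNReal.ofReal (‖x‖ ^ p) ∂μH[d] ≤
      ENNReal.ofReal (ρ ^ (d + p / α)) * μH[d] (sphere (0 : E) 1) :=
  calc ∫⁻ x in sphere q ρ, ENNReal.ofReal (‖x‖ ^ p) ∂μH[d]
      ≤ ∫⁻ _ in sphere q ρ, ENNReal.ofReal (ρ ^ (p / α)) ∂μH[d] :=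
        setLIntegral_mono measurable_const fun x hx =>
          ENNReal.ofReal_le_ofReal (norm_rpow_le_of_mem_sphere hα hp hρ hρ1 hq hx)
    _ = ENNReal.ofReal (ρ ^ (d + p / α)) * μH[d] (sphere (0 : E) 1) := by
        rw [setLIntegral_const, hausdorffMeasure_sphere hd q hρ, ← mul_assoc,
          ← ENNReal.ofReal_mul (by positivity), ← Real.rpow_add hρ, add_comm]

end Normed

section InnerProduct

variable {E : Type*} [NormedAddCommGroup E] [InnerProductSpace ℝ E]

theorem lipschitzWith_normalize_add_orthogonal {v : E} (hv : ‖v‖ = 1) :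
    LipschitzWith 2 fun y : (ℝ ∙ v)ᗮ => NormedSpace.normalize (v + y) := by
  have hmaps : MapsTo (fun y : (ℝ ∙ v)ᗮ => v + (y : E)) univ {z | 1 ≤ ‖z‖} := by
    intro y _
    have hpyth := norm_add_sq_eq_norm_sq_add_norm_sq_of_inner_eq_zero v (y : E)
      (Submodule.mem_orthogonal_singleton_iff_inner_right.1 y.2)
    rw [hv] at hpyth
    show 1 ≤ ‖v + y‖
    nlinarith [norm_nonneg (v + (y : E)), norm_nonneg (y : E)]
  have hiso : LipschitzWith 1 fun y : (ℝ ∙ v)ᗮ => v + (y : E) :=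
    LipschitzWith.of_dist_le_mul fun y z => by simp [dist_eq_norm]
  simpa [Function.comp_def] using lipschitzOnWith_univ.1
    ((lipschitzOnWith_normalize (E := E)).comp hiso.lipschitzOnWith hmaps)

theorem sphere_inter_inner_gt_subset_image {v : E} (hv : ‖v‖ = 1) :
    sphere (0 : E) 1 ∩ {u | 1 / 2 < ⟪u, v⟫} ⊆
      (fun y : (ℝ ∙ v)ᗮ => NormedSpace.normalize (v + y)) '' closedBall 0 3 := by
  rintro u ⟨hu, huv⟩
  rw [mem_sphere_zero_iff_norm] at hu
  change 1 / 2 < ⟪u, v⟫ at huv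
  have hc : 0 < ⟪u, v⟫ := by linarith
  set y := ⟪u, v⟫⁻¹ • u - v
  have hy : y ∈ (ℝ ∙ v)ᗮ := by
    rw [Submodule.mem_orthogonal_singleton_iff_inner_right, inner_sub_right, inner_smul_right,
      real_inner_comm u v, inv_mul_cancel₀ hc.ne', real_inner_self_eq_norm_sq, hv]
    norm_num
  refine ⟨⟨y, hy⟩, ?_, ?_⟩
  · rw [mem_closedBall_zero_iff, Submodule.coe_norm]
    calc ‖y‖ ≤ ‖⟪u, v⟫⁻¹ • u‖ + ‖v‖ := norm_sub_le _ _
      _ ≤ 3 := by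
        rw [norm_smul, hu, hv, norm_inv, Real.norm_of_nonneg hc.le, mul_one]
        linarith [(inv_lt_comm₀ (by norm_num) hc).1 (by linarith : 2⁻¹ < ⟪u, v⟫)]
  · simp [y, NormedSpace.normalize_smul_of_pos (inv_pos.2 hc),
      NormedSpace.normalize_eq_self_of_norm_eq_one hu]

open Module in
theorem hausdorffMeasure_sphere_lt_top [FiniteDimensional ℝ E] [MeasurableSpace E]
    [BorelSpace E] : μH[(finrank ℝ E : ℝ) - 1] (sphere (0 : E) 1) < ∞ := by
  set d : ℝ := (finrank ℝ E : ℝ) - 1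
  set cap : sphere (0 : E) 1 → Set E := fun v => sphere 0 1 ∩ {u | 1 / 2 < ⟪u, (v : E)⟫}
  have hcap : ∀ v, μH[d] (cap v) < ∞ := by
    rintro ⟨v, hv⟩
    rw [mem_sphere_zero_iff_norm] at hv
    have hdim : ((finrank ℝ (ℝ ∙ v)ᗮ : ℕ) : ℝ) = d := by
      have := Submodule.finrank_add_finrank_orthogonal (ℝ ∙ v)
      rw [finrank_span_singleton (norm_ne_zero_iff.1 (hv ▸ one_ne_zero))] at this
      simp only [d, ← this]; push_cast; ring
    calc μH[d] (cap ⟨v, _⟩)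
        ≤ μH[d] ((fun y : (ℝ ∙ v)ᗮ => NormedSpace.normalize (v + y)) '' closedBall 0 3) :=
          measure_mono (sphere_inter_inner_gt_subset_image hv)
      _ ≤ 2 ^ d * μH[d] (closedBall (0 : (ℝ ∙ v)ᗮ) 3) :=
          (lipschitzWith_normalize_add_orthogonal hv).hausdorffMeasure_image_le
            (hdim ▸ Nat.cast_nonneg _) _
      _ < ∞ := by
        rw [← hdim]
        exact ENNReal.mul_lt_top (by simp) (isCompact_closedBall _ _).measure_lt_top
  obtain ⟨t, ht⟩ := (isCompact_sphere (0 : E) 1).elim_finite_subcover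
    (fun v : sphere (0 : E) 1 => {u : E | 1 / 2 < ⟪u, (v : E)⟫})
    (fun v => isOpen_lt continuous_const (continuous_id.inner continuous_const))
    (fun u hu => mem_iUnion.2 ⟨⟨u, hu⟩, by norm_num [mem_sphere_zero_iff_norm.1 hu]⟩)
  have hcover : sphere (0 : E) 1 ⊆ ⋃ v ∈ t, cap v := fun u hu => by
    obtain ⟨v, hvt, huv⟩ := mem_iUnion₂.1 (ht hu)
    exact mem_iUnion₂.2 ⟨v, hvt, hu, huv⟩
  calc μH[d] (sphere 0 1) ≤ ∑ v ∈ t, μH[d] (cap v) :=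
        (measure_mono hcover).trans (measure_biUnion_finset_le _ _)
    _ < ∞ := ENNReal.sum_lt_top.2 fun v _ => hcap v

end InnerProduct

theorem stmt_17_general (n : ℕ) (α p : ℝ) (hα : 1 < α) (hp : p < 0)
    (hconv : 0 < (n : ℝ) - 1 + p / α) :
    ∃ C : ℝ, 0 < C ∧
      ∀ r : ℝ, 0 < r → r < (2 : ℝ) ^ (-α) →
        ∀ q : ℕ → EuclideanSpace ℝ (Fin n),
          (∀ i, q i ∈ ball (0 : EuclideanSpace ℝ (Fin n)) 1) →
          (∀ i : ℕ, (2 : ℝ) ^ α * (r * (2 : ℝ) ^ (-(i : ℝ) / n)) < ‖q i‖ ^ α) →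
          (∑' i : ℕ,
              ∫⁻ x in sphere (q i) (r * (2 : ℝ) ^ (-(i : ℝ) / n)),
                ENNReal.ofReal (‖x‖ ^ p) ∂(μH[(n : ℝ) - 1])) ≤
            ENNReal.ofReal (C * r ^ ((n : ℝ) - 1 + p / α)) := by
  set β := (n : ℝ) - 1 + p / α
  set S := (μH[(n : ℝ) - 1] (sphere (0 : EuclideanSpace ℝ (Fin n)) 1)).toReal
  set t : ℝ := 2 ^ (-(β / n))
  have hd : 0 ≤ (n : ℝ) - 1 := by
    have := div_neg_of_neg_of_pos hp (by linarith : (0 : ℝ) < α)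
    linarith
  have ht0 : 0 ≤ t := by positivity
  have ht1 : t < 1 :=
    Real.rpow_lt_one_of_one_lt_of_neg one_lt_two (neg_lt_zero.2 (div_pos hconv (by linarith)))
  have hS : μH[(n : ℝ) - 1] (sphere (0 : EuclideanSpace ℝ (Fin n)) 1) = ENNReal.ofReal S :=
    (ENNReal.ofReal_toReal (by
      simpa using (hausdorffMeasure_sphere_lt_top (E := EuclideanSpace ℝ (Fin n))).ne)).symm
  refine ⟨(S + 1) / (1 - t), div_pos (by positivity) (sub_pos.2 ht1), ?_⟩
  intro r hr hr2 q _ hq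
  have hterm : ∀ i : ℕ, ∫⁻ x in sphere (q i) (r * (2 : ℝ) ^ (-(i : ℝ) / n)),
      ENNReal.ofReal (‖x‖ ^ p) ∂(μH[(n : ℝ) - 1]) ≤ ENNReal.ofReal (S * r ^ β * t ^ i) := by
    intro i
    have hρ1 : r * (2 : ℝ) ^ (-(i : ℝ) / n) ≤ 1 :=
      mul_le_one₀ (hr2.le.trans (Real.rpow_le_one_of_one_le_of_nonpos one_le_two (by linarith)))
        (by positivity) (Real.rpow_le_one_of_one_le_of_nonpos one_le_two
          (div_nonpos_of_nonpos_of_nonneg (neg_nonpos.2 i.cast_nonneg) n.cast_nonneg))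
    have hρβ : (r * (2 : ℝ) ^ (-(i : ℝ) / n)) ^ β = r ^ β * t ^ i := by
      rw [Real.mul_rpow hr.le (by positivity), ← Real.rpow_natCast, ← Real.rpow_mul zero_le_two,
        ← Real.rpow_mul zero_le_two]
      ring_nf
    calc _ ≤ _ := setLIntegral_sphere_norm_rpow_le hd hα.le hp.le (by positivity) hρ1 (hq i)
      _ = _ := by rw [hρβ, hS, ← ENNReal.ofReal_mul (by positivity), mul_comm, mul_assoc]
  calc _ ≤ ∑' i : ℕ, ENNReal.ofReal (S * r ^ β * t ^ i) := ENNReal.tsum_le_tsum hterm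
    _ = ENNReal.ofReal (S * r ^ β * (1 - t)⁻¹) := by
      rw [← ENNReal.ofReal_tsum_of_nonneg (fun i => by positivity)
        ((summable_geometric_of_lt_one ht0 ht1).mul_left _), tsum_mul_left,
        tsum_geometric_of_lt_one ht0 ht1]
    _ ≤ ENNReal.ofReal ((S + 1) / (1 - t) * r ^ β) := by
      gcongr ENNReal.ofReal ?_
      rw [div_mul_eq_mul_div, div_eq_mul_inv]
      have := sub_pos.2 ht1
      gcongr
      linarith

/-- Summing the weighted surface measures of the spheres `∂B_{rᵢ}(qᵢ)` with weight
`|x|^p`: `Σᵢ ∫_{∂B_{rᵢ}(qᵢ)} |x|^p dH^{n−1} ≤ C(n,α,p) r^{n−1+p/α}`. -/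
theorem stmt_17 (n : ℕ) (hn : 2 ≤ n) (α p : ℝ) (hα : 1 < α) (hp : p < 0)
    (hnp : (n : ℝ) - 1 + p < 0) (hconv : 0 < (n : ℝ) - 1 + p / α) :
    ∃ C : ℝ, 0 < C ∧
      ∀ r : ℝ, 0 < r → r < (2 : ℝ) ^ (-α) →
        ∀ q : ℕ → EuclideanSpace ℝ (Fin n),
          (∀ i, q i ∈ ball (0 : EuclideanSpace ℝ (Fin n)) 1) →
          (∀ i : ℕ, (2 : ℝ) ^ α * (r * (2 : ℝ) ^ (-(i : ℝ) / n)) < ‖q i‖ ^ α) →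
          (∑' i : ℕ,
              ∫⁻ x in sphere (q i) (r * (2 : ℝ) ^ (-(i : ℝ) / n)),
                ENNReal.ofReal (‖x‖ ^ p) ∂(μH[(n : ℝ) - 1])) ≤
            ENNReal.ofReal (C * r ^ ((n : ℝ) - 1 + p / α)) :=
  stmt_17_general n α p hα hp hconv
end

section
/- Let w : ℝ → ℝ be an even convex C² function and n ≥ 2. For ε ≥ 0 let ρ(ε) > 0 be defined by the volume constraint ∫_{B_{ρ(ε)}(ε e₁)} e^{w(|x|)} dx = ∫_{B_1} e^{w(|x|)} dx. Then ρ is differentiable at 0 with ρ(0) = 1 and ρ'(0) = 0. -/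
/-!
The weighted volume `G ε = ∫_{B_1(ε e₁)} e^{w(|x|)} dx` is an even function of `ε` (substitute
`x ↦ -x`), and it is differentiable at `0` by differentiation under the integral sign: the
integrand is locally Lipschitz, hence a.e. differentiable by Rademacher's theorem. So `G ε - G 0`
is `o(ε)`. On the other hand, the weight is bounded below near the origin, so changing the radius
of a ball from `1` to `ρ` changes its weighted volume by at least a fixed multiple of
`min |ρ - 1| 1`. The constraint says that `B_{ρ(ε)}(ε e₁)` has weighted volume `G 0`, hence
`|ρ ε - 1| = O(|G ε - G 0|) = o(ε)`.
-/

open MeasureTheory Metric Set Real Module Bornology Filter Topology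

theorem HasDerivAt.eq_zero_of_even {F : Type*} [NormedAddCommGroup F] [NormedSpace ℝ F]
    {g : ℝ → F} {g' : F} (hg : HasDerivAt g g' 0) (heven : ∀ t, g (-t) = g t) : g' = 0 := by
  have hneg := ((neg_zero (G := ℝ)).symm ▸ hg).scomp (0 : ℝ) (hasDerivAt_neg 0)
  rw [show g ∘ Neg.neg = g from funext heven, neg_one_smul] at hneg
  have h2 : (2 : ℝ) • g' = 0 := by
    rw [two_smul]; nth_rewrite 2 [hg.unique hneg]; exact add_neg_cancel g'
  simpa using h2

theorem isLittleO_of_mul_min_abs_le {α : Type*} {l : Filter α} {u g k : α → ℝ} {C : ℝ}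
    (hC : 0 < C) (hu : ∀ᶠ x in l, C * min |u x| 1 ≤ |g x|) (hg : g =o[l] k)
    (hk : Tendsto k l (𝓝 0)) : u =o[l] k := by
  have hsmall : ∀ᶠ x in l, |g x| < C := by
    simpa using (hg.trans_tendsto hk).eventually (ball_mem_nhds 0 hC)
  refine (Asymptotics.IsBigO.of_bound C⁻¹ ?_).trans_isLittleO hg
  filter_upwards [hu, hsmall] with x hx hgx
  have hmin : min |u x| 1 = |u x| := min_eq_left <| not_lt.mp fun h₁ ↦ by
    rw [min_eq_right h₁.le, mul_one] at hx
    linarith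
  rw [Real.norm_eq_abs, Real.norm_eq_abs, le_inv_mul_iff₀ hC, ← hmin]
  exact hx

section ShiftedBall

variable {E : Type*} [NormedAddCommGroup E] [MeasurableSpace E] [BorelSpace E]

theorem setIntegral_comp_sub_of_even (μ : Measure E) [μ.IsNegInvariant] {s : Set E}
    (hs : -s = s) {f : E → ℝ} (hf : ∀ x, f (-x) = f x) (y : E) :
    ∫ x in s, f (x - y) ∂μ = ∫ x in s, f (x + y) ∂μ := by
  have h := (Measure.measurePreserving_neg μ).setIntegral_preimage_emb
    (Homeomorph.neg E).measurableEmbedding (fun x ↦ f (x + y)) s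
  rw [show Neg.neg ⁻¹' s = -s from rfl, hs] at h
  rw [← h]
  congr 1 with x
  rw [← hf]
  congr 1
  abel

variable [NormedSpace ℝ E] [FiniteDimensional ℝ E] (μ : Measure E) [μ.IsAddHaarMeasure]

theorem hasDerivAt_setIntegral_comp_add_smul {f : E → ℝ} (hf : LocallyLipschitz f) {s : Set E}
    (hs : IsBounded s) (hsm : MeasurableSet s) (v : E) :
    HasDerivAt (fun t : ℝ ↦ ∫ x in s, f (x + t • v) ∂μ) (∫ x in s, fderiv ℝ f x v ∂μ) 0 := by
  obtain ⟨R, hR⟩ := hs.subset_ball 0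
  obtain ⟨K, hK⟩ := hf.locallyLipschitzOn.exists_lipschitzOnWith_of_compact
    (isCompact_closedBall (0 : E) (R + ‖v‖))
  have hKU : LipschitzOnWith K f (ball 0 (R + ‖v‖)) := hK.mono ball_subset_closedBall
  have hline (x : E) : LipschitzWith ‖v‖₊ (fun t : ℝ ↦ x + t • v) :=
    LipschitzWith.of_dist_le_mul fun s t ↦ by
      simp [dist_eq_norm, ← sub_smul, norm_smul, mul_comm]
  have hmaps {x : E} (hx : x ∈ s) :
      MapsTo (fun t : ℝ ↦ x + t • v) (ball 0 1) (ball 0 (R + ‖v‖)) := by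
    intro t ht
    rw [mem_ball_zero_iff, norm_eq_abs] at ht
    rw [mem_ball_zero_iff]
    calc ‖x + t • v‖ ≤ ‖x‖ + |t| * ‖v‖ :=
          (norm_add_le _ _).trans_eq (by rw [norm_smul, norm_eq_abs])
      _ < R + ‖v‖ := add_lt_add_of_lt_of_le (mem_ball_zero_iff.mp (hR hx))
          (mul_le_of_le_one_left (norm_nonneg v) ht.le)
  -- Rademacher's theorem
  have hdiff : ∀ᵐ x ∂μ.restrict s, DifferentiableAt ℝ f x := by
    have hU := ae_restrict_of_ae_restrict_of_subset (hR.trans (ball_subset_ball (by simp)))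
      (hKU.ae_differentiableWithinAt (μ := μ) measurableSet_ball)
    filter_upwards [hU, ae_restrict_mem hsm] with x hxd hxs
    exact hxd.differentiableAt (isOpen_ball.mem_nhds (ball_subset_ball (by simp) (hR hxs)))
  have hcont : Continuous f := hf.continuous
  refine (hasDerivAt_integral_of_dominated_loc_of_lip (ball_mem_nhds (0 : ℝ) one_pos)
    (bound := fun _ ↦ ((K * ‖v‖₊ : NNReal) : ℝ)) ?_ ?_
    (measurable_fderiv_apply_const ℝ f v).aestronglyMeasurable ?_ ?_ ?_).2
  · exact .of_forall fun t ↦ (hcont.comp (continuous_add_const _)).aestronglyMeasurable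
  · simp only [zero_smul, add_zero]
    exact (hcont.continuousOn.integrableOn_compact hs.isCompact_closure).mono_set subset_closure
  · filter_upwards [ae_restrict_mem hsm] with x hx
    rw [Real.nnabs_coe]
    exact hKU.comp (hline x).lipschitzOnWith (hmaps hx)
  · exact integrableOn_const hs.measure_lt_top.ne
  · filter_upwards [hdiff] with x hx
    have hx' : HasFDerivAt f (fderiv ℝ f x) (x + (0 : ℝ) • v) := by simpa using hx.hasFDerivAt
    simpa [Function.comp_def] using
      hx'.comp_hasDerivAt (0 : ℝ) ((hasDerivAt_id (0 : ℝ)).smul_const v |>.const_add x)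

theorem hasDerivAt_setIntegral_ball_smul_of_even {f : E → ℝ} (hf : LocallyLipschitz f)
    (heven : ∀ x, f (-x) = f x) (v : E) (r : ℝ) :
    HasDerivAt (fun ε : ℝ ↦ ∫ x in ball (ε • v) r, f x ∂μ) 0 0 := by
  have htrans (ε : ℝ) : ∫ x in ball (ε • v) r, f x ∂μ = ∫ x in ball 0 r, f (x + ε • v) ∂μ := by
    rw [← (measurePreserving_add_right μ (ε • v)).setIntegral_preimage_emb
      (measurableEmbedding_addRight _) f (ball (ε • v) r)]
    simp
  simp_rw [htrans]
  have hd := hasDerivAt_setIntegral_comp_add_smul μ hf (isBounded_ball (x := 0) (r := r))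
    measurableSet_ball v
  convert hd using 1
  refine (hd.eq_zero_of_even fun ε ↦ ?_).symm
  rw [neg_smul]
  simp_rw [← sub_eq_add_neg]
  exact setIntegral_comp_sub_of_even μ (by rw [neg_ball, neg_zero]) heven _

end ShiftedBall

section VolumeConstraint

variable {E : Type*} [NormedAddCommGroup E] [NormedSpace ℝ E] [FiniteDimensional ℝ E]
  [MeasurableSpace E] [BorelSpace E] [Nontrivial E] (μ : Measure E) [μ.IsAddHaarMeasure]

theorem addHaar_real_ball (x : E) {r : ℝ} (hr : 0 ≤ r) :
    μ.real (ball x r) = r ^ finrank ℝ E * μ.real (ball 0 1) := by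
  rw [measureReal_def, Measure.addHaar_ball μ x hr, ENNReal.toReal_mul,
    ENNReal.toReal_ofReal (by positivity), measureReal_def]

theorem setIntegral_ball_add_le_setIntegral_ball {f : E → ℝ} (hf : LocallyIntegrable f μ)
    {c : E} {m r₁ r₂ : ℝ} (h₁ : 0 ≤ r₁) (h₁₂ : r₁ ≤ r₂) (hm : ∀ x ∈ ball c r₂, m ≤ f x) :
    ∫ x in ball c r₁, f x ∂μ + m * ((r₂ ^ finrank ℝ E - r₁ ^ finrank ℝ E) * μ.real (ball 0 1))
      ≤ ∫ x in ball c r₂, f x ∂μ := by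
  have hsub : ball c r₁ ⊆ ball c r₂ := ball_subset_ball h₁₂
  have hint : IntegrableOn f (ball c r₂) μ :=
    (hf.integrableOn_isCompact (isCompact_closedBall c r₂)).mono_set ball_subset_closedBall
  have hann : μ.real (ball c r₂ \ ball c r₁) * m ≤ ∫ x in ball c r₂ \ ball c r₁, f x ∂μ :=
    setIntegral_ge_of_const_le (measurableSet_ball.diff measurableSet_ball)
      (measure_ne_top_of_subset sdiff_subset measure_ball_lt_top.ne) (fun x hx ↦ hm x hx.1)
      (hint.mono_set sdiff_subset)
  rw [setIntegral_sdiff measurableSet_ball hint hsub, measureReal_sdiff hsub measurableSet_ball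
    measure_ball_lt_top.ne, addHaar_real_ball μ c (h₁.trans h₁₂), addHaar_real_ball μ c h₁] at hann
  linarith

theorem mul_min_abs_sub_one_le_abs_setIntegral_ball_sub {f : E → ℝ} (hf : LocallyIntegrable f μ)
    (hf₀ : ∀ x, 0 ≤ f x) {c : E} {m r : ℝ} (hm₀ : 0 ≤ m) (hm : ∀ x ∈ ball c 2, m ≤ f x)
    (hr : 0 ≤ r) :
    m * μ.real (ball 0 1) * min |r - 1| 1 ≤
      |∫ x in ball c r, f x ∂μ - ∫ x in ball c 1, f x ∂μ| := by
  have hd : 1 ≤ finrank ℝ E := finrank_pos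
  have hω : 0 ≤ μ.real (ball (0 : E) 1) := measureReal_nonneg
  rcases le_total r 1 with hr₁ | hr₁
  · have hann := setIntegral_ball_add_le_setIntegral_ball μ hf hr hr₁
      (fun x hx ↦ hm x (ball_subset_ball one_le_two hx))
    have hpow : r ^ finrank ℝ E ≤ r := pow_le_of_le_one hr hr₁ (by omega)
    rw [one_pow] at hann
    calc m * μ.real (ball 0 1) * min |r - 1| 1
          ≤ m * ((1 - r ^ finrank ℝ E) * μ.real (ball 0 1)) := by
          rw [abs_of_nonpos (by linarith)]
          nlinarith [min_le_left (-(r - 1)) 1, mul_nonneg hm₀ hω]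
      _ ≤ _ := by rw [abs_sub_comm]; exact (le_abs_self _).trans' (by linarith)
  · -- `m ≤ f` is only known on `ball c 2`; beyond radius `2` use monotonicity in the radius.
    set s := min r 2
    have hs₁ : 1 ≤ s := le_min hr₁ one_le_two
    have hann := setIntegral_ball_add_le_setIntegral_ball μ hf zero_le_one hs₁
      (fun x hx ↦ hm x (ball_subset_ball (min_le_right r 2) hx))
    have hmono : ∫ x in ball c s, f x ∂μ ≤ ∫ x in ball c r, f x ∂μ :=
      setIntegral_mono_set ((hf.integrableOn_isCompact (isCompact_closedBall c r)).mono_set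
        ball_subset_closedBall) (.of_forall hf₀) (ball_subset_ball (min_le_left r 2)).eventuallyLE
    have hpow : s ≤ s ^ finrank ℝ E := le_self_pow₀ hs₁ (by omega)
    rw [one_pow] at hann
    calc m * μ.real (ball 0 1) * min |r - 1| 1 = m * μ.real (ball 0 1) * (s - 1) := by
          rw [abs_of_nonneg (by linarith), ← min_sub_sub_right]; norm_num
      _ ≤ m * ((s ^ finrank ℝ E - 1) * μ.real (ball 0 1)) := by nlinarith [mul_nonneg hm₀ hω]
      _ ≤ _ := (le_abs_self _).trans' (by linarith)

theorem hasDerivWithinAt_radius_of_setIntegral_ball_eq {f : E → ℝ} (hf : Continuous f)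
    (hpos : ∀ x, 0 < f x) {v : E}
    (hG : HasDerivWithinAt (fun ε : ℝ ↦ ∫ x in ball (ε • v) 1, f x ∂μ) 0 (Ici 0) 0)
    {ρ : ℝ → ℝ} (hρ : ∀ ε : ℝ, 0 ≤ ε → 0 < ρ ε ∧
      ∫ x in ball (ε • v) (ρ ε), f x ∂μ = ∫ x in ball 0 1, f x ∂μ) :
    ρ 0 = 1 ∧ HasDerivWithinAt ρ 0 (Ici 0) 0 := by
  set G := fun ε : ℝ ↦ ∫ x in ball (ε • v) 1, f x ∂μ
  obtain ⟨m, hm₀, hm⟩ : ∃ m > 0, ∀ x ∈ closedBall (0 : E) 3, m ≤ f x := by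
    obtain ⟨z, -, hz⟩ := (isCompact_closedBall (0 : E) 3).exists_isMinOn
      (nonempty_closedBall.2 (by norm_num)) hf.continuousOn
    exact ⟨f z, hpos z, fun x hx ↦ hz hx⟩
  set C := m * μ.real (ball 0 1)
  have hC : 0 < C :=
    mul_pos hm₀ (ENNReal.toReal_pos (measure_ball_pos μ 0 one_pos).ne' measure_ball_lt_top.ne)
  have hG₀ : G 0 = ∫ x in ball 0 1, f x ∂μ := by simp [G]
  have key (ε : ℝ) (hε : 0 ≤ ε) (hv : ‖ε • v‖ < 1) : C * min |ρ ε - 1| 1 ≤ |G ε - G 0| := by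
    obtain ⟨hρ₀, hρeq⟩ := hρ ε hε
    have hm' : ∀ x ∈ ball (ε • v) 2, m ≤ f x := fun x hx ↦ hm x <| by
      rw [mem_closedBall_zero_iff]
      linarith [norm_le_norm_add_norm_sub' x (ε • v), mem_ball_iff_norm.mp hx]
    have := mul_min_abs_sub_one_le_abs_setIntegral_ball_sub μ hf.locallyIntegrable
      (fun x ↦ (hpos x).le) hm₀.le hm' hρ₀.le
    rw [hρeq, ← hG₀] at this
    exact this.trans_eq (abs_sub_comm _ _)
  have hρ0 : ρ 0 = 1 := by
    have h := key 0 le_rfl (by simp)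
    rw [sub_self, abs_zero] at h
    rcases min_le_iff.mp (nonpos_of_mul_nonpos_right h hC) with h | h
    · exact sub_eq_zero.mp (abs_nonpos_iff.mp h)
    · norm_num at h
  refine ⟨hρ0, ?_⟩
  have hv : ∀ᶠ ε in 𝓝 (0 : ℝ), ε • v ∈ ball 0 1 := by
    have := (continuous_id.smul continuous_const (g := fun _ : ℝ ↦ v)).tendsto 0
    simpa using this.eventually (ball_mem_nhds _ one_pos)
  have hkey : ∀ᶠ ε in 𝓝[≥] 0, C * min |ρ ε - 1| 1 ≤ |G ε - G 0| := by
    filter_upwards [nhdsWithin_le_nhds hv, self_mem_nhdsWithin] with ε hεv hε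
    exact key ε hε (mem_ball_zero_iff.mp hεv)
  rw [hasDerivWithinAt_iff_isLittleO] at hG ⊢
  simp only [sub_zero, smul_zero, hρ0] at hG ⊢
  exact isLittleO_of_mul_min_abs_le hC hkey hG (tendsto_nhdsWithin_of_tendsto_nhds tendsto_id)

end VolumeConstraint

/-- If `ρ(ε)` is defined by the weighted volume constraint
`∫_{B_{ρ(ε)}(ε e₁)} e^{w(|x|)} dx = ∫_{B₁} e^{w(|x|)} dx` for `ε ≥ 0`, with `w` even,
convex and `C²`, then `ρ(0) = 1` and `ρ'(0) = 0` (one-sided derivative at `0`). -/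
theorem stmt_19 (n : ℕ) (hn : 2 ≤ n) (w : ℝ → ℝ) (hw : ContDiff ℝ 2 w)
    (ρ : ℝ → ℝ)
    (hρ : ∀ ε : ℝ, 0 ≤ ε → 0 < ρ ε ∧
      (∫ x in ball (ε • EuclideanSpace.single (⟨0, by omega⟩ : Fin n) (1 : ℝ)) (ρ ε),
          Real.exp (w ‖x‖)) =
        ∫ x in ball (0 : EuclideanSpace ℝ (Fin n)) 1, Real.exp (w ‖x‖)) :
    ρ 0 = 1 ∧ HasDerivWithinAt ρ 0 (Ici (0 : ℝ)) 0 := by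
  have : NeZero n := ⟨by omega⟩
  have hf : LocallyLipschitz fun x : EuclideanSpace ℝ (Fin n) ↦ Real.exp (w ‖x‖) :=
    (contDiff_exp.comp (hw.of_le one_le_two)).locallyLipschitz.comp
      lipschitzWith_one_norm.locallyLipschitz
  have hG := hasDerivAt_setIntegral_ball_smul_of_even volume hf (fun x ↦ by rw [norm_neg])
    (EuclideanSpace.single (⟨0, by omega⟩ : Fin n) (1 : ℝ)) 1
  exact hasDerivWithinAt_radius_of_setIntegral_ball_eq volume hf.continuous (fun _ ↦ exp_pos _)
    hG.hasDerivWithinAt hρ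
end
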